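/- arXiv:1601.05877 — 2 statements merged into one kernel-verified Lean document; each statement's English description precedes it below -/
import Mathlib

section
/- Suppose γ is C², its stiffness γ + γ'' is strictly positive on [0, π], and σ satisfies f(π;σ) < 0 < f(0;σ), where f(θ;σ) = γ(θ)cos θ − γ'(θ)sin θ − σ. Then there exists a unique θ_a ∈ (0, π) with f(θ_a;σ) = 0 (the equilibrium contact angle given by the anisotropic Young equation). -/
/-! In `f' = -(γ + γ'') sin θ` the `γ' cos θ` terms cancel, so positive stiffness makes `f`
strictly decreasing on `[0, π]`; the intermediate value theorem then gives exactly one zero. -/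

open Real Set

theorem hasDerivAt_mul_cos_sub_deriv_mul_sin {γ : ℝ → ℝ} {x : ℝ}
    (hγ : DifferentiableAt ℝ γ x) (hγ' : DifferentiableAt ℝ (deriv γ) x) :
    HasDerivAt (fun θ => γ θ * cos θ - deriv γ θ * sin θ)
      (-((γ x + deriv (deriv γ) x) * sin x)) x :=
  ((hγ.hasDerivAt.mul (hasDerivAt_cos x)).sub
    (hγ'.hasDerivAt.mul (hasDerivAt_sin x))).congr_deriv (by ring)

theorem existsUnique_mem_Ioo_eq_of_strictAntiOn {f : ℝ → ℝ} {a b c : ℝ} (hab : a ≤ b)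
    (hcont : ContinuousOn f (Icc a b)) (hanti : StrictAntiOn f (Icc a b))
    (hb : f b < c) (ha : c < f a) :
    ∃! x, x ∈ Ioo a b ∧ f x = c := by
  obtain ⟨x, hx, hfx⟩ := intermediate_value_Ioo' hab hcont ⟨hb, ha⟩
  refine ⟨x, ⟨hx, hfx⟩, fun y ⟨hy, hfy⟩ => ?_⟩
  exact hanti.injOn (Ioo_subset_Icc_self hy) (Ioo_subset_Icc_self hx) (hfy.trans hfx.symm)

/-- If γ is C², the stiffness γ + γ'' is positive on [0,π], and
f(π;σ) < 0 < f(0;σ), then the anisotropic Young equation f(θ;σ)=0 has a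
unique solution θ_a ∈ (0,π). -/
theorem stmt5 (γ : ℝ → ℝ) (hγ : ContDiff ℝ 2 γ) (σ : ℝ)
    (f : ℝ → ℝ) (hf : f = fun θ => γ θ * Real.cos θ - deriv γ θ * Real.sin θ - σ)
    (hstiff : ∀ θ ∈ Set.Icc (0 : ℝ) π, 0 < γ θ + deriv (deriv γ) θ)
    (hπ : f π < 0) (h0 : 0 < f 0) :
    ∃! θa : ℝ, θa ∈ Set.Ioo (0 : ℝ) π ∧ f θa = 0 := by
  have hγ' : Differentiable ℝ (deriv γ) :=
    (hγ.iterate_deriv' 1 1).differentiable one_ne_zero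
  have hf' : ∀ x, HasDerivAt f (-((γ x + deriv (deriv γ) x) * sin x)) x := fun x => by
    rw [hf]
    exact (hasDerivAt_mul_cos_sub_deriv_mul_sin
      ((hγ.differentiable two_ne_zero) x) (hγ' x)).sub_const σ
  have hcont : ContinuousOn f (Icc 0 π) := fun x _ => (hf' x).continuousAt.continuousWithinAt
  have hanti : StrictAntiOn f (Icc 0 π) := by
    refine strictAntiOn_of_deriv_neg (convex_Icc 0 π) hcont fun x hx => ?_
    rw [interior_Icc] at hx
    rw [(hf' x).deriv, neg_lt_zero]
    exact mul_pos (hstiff x (Ioo_subset_Icc_self hx)) (sin_pos_of_pos_of_lt_pi hx.1 hx.2)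
  exact existsUnique_mem_Ioo_eq_of_strictAntiOn pi_pos.le hcont hanti hπ h0
end

section
/- If (X, μ, κ) is a weak solution of the variational formulation of the sharp-interface solid-state dewetting model with isotropic or weakly anisotropic surface energy (equations ⟨∂_t X, φ n⟩_Γ + ⟨∂_s μ, ∂_s φ⟩_Γ = 0 for all φ ∈ H¹, together with the contact point condition y(0,t)=y(1,t)=0), then the total mass A(t) = ∫₀¹ y ∂_ρ x dρ is conserved: A(t) = A(0) for all t ≥ 0. -/
/-!
Differentiating `A(t) = ∫₀¹ y ∂_ρx dρ` under the integral sign gives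
`A' = ∫₀¹ (∂_t y ∂_ρx + y ∂_ρ∂_t x) dρ`. Integrating the second term by parts in `ρ`, the
boundary terms vanish because `y = 0` at the contact points, so
`A' = ∫₀¹ (∂_t y ∂_ρx - ∂_t x ∂_ρy) dρ = ∫_Γ ∂_t X · n ds`. This is the weak equation tested with
`φ ≡ 1`, whose derivative kills the `μ`-term; hence `A' = 0` for `t ≥ 0`.
-/

open Set Metric MeasureTheory

section PartialDeriv

variable {E : Type*} [NormedAddCommGroup E] [NormedSpace ℝ E] {f : ℝ × ℝ → E}

noncomputable def partialFst (f : ℝ × ℝ → E) (p : ℝ × ℝ) : E := fderiv ℝ f p (1, 0)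

noncomputable def partialSnd (f : ℝ × ℝ → E) (p : ℝ × ℝ) : E := fderiv ℝ f p (0, 1)

theorem DifferentiableAt.hasDerivAt_partialFst {t ρ : ℝ} (hf : DifferentiableAt ℝ f (t, ρ)) :
    HasDerivAt (fun τ => f (τ, ρ)) (partialFst f (t, ρ)) t :=
  hf.hasFDerivAt.comp_hasDerivAt t ((hasDerivAt_id t).prodMk (hasDerivAt_const t ρ))

theorem DifferentiableAt.hasDerivAt_partialSnd {t ρ : ℝ} (hf : DifferentiableAt ℝ f (t, ρ)) :
    HasDerivAt (fun r => f (t, r)) (partialSnd f (t, ρ)) ρ :=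
  hf.hasFDerivAt.comp_hasDerivAt ρ ((hasDerivAt_const ρ t).prodMk (hasDerivAt_id ρ))

theorem deriv_eq_partialFst_uncurry {f : ℝ → ℝ → E} {t ρ : ℝ}
    (hf : DifferentiableAt ℝ (Function.uncurry f) (t, ρ)) :
    deriv (fun τ => f τ ρ) t = partialFst (Function.uncurry f) (t, ρ) :=
  hf.hasDerivAt_partialFst.deriv

theorem deriv_eq_partialSnd_uncurry {f : ℝ → ℝ → E} {t ρ : ℝ}
    (hf : DifferentiableAt ℝ (Function.uncurry f) (t, ρ)) :
    deriv (f t) ρ = partialSnd (Function.uncurry f) (t, ρ) :=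
  hf.hasDerivAt_partialSnd.deriv

theorem contDiff_partialFst {m n : WithTop ℕ∞} (hf : ContDiff ℝ n f) (hmn : m + 1 ≤ n) :
    ContDiff ℝ m (partialFst f) :=
  (hf.fderiv_right hmn).clm_apply contDiff_const

theorem contDiff_partialSnd {m n : WithTop ℕ∞} (hf : ContDiff ℝ n f) (hmn : m + 1 ≤ n) :
    ContDiff ℝ m (partialSnd f) :=
  (hf.fderiv_right hmn).clm_apply contDiff_const

theorem partialFst_partialSnd (hf : ContDiff ℝ 2 f) :
    partialFst (partialSnd f) = partialSnd (partialFst f) := by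
  ext p
  have hdiff : DifferentiableAt ℝ (fderiv ℝ f) p :=
    (hf.fderiv_right (m := 1) le_rfl).differentiable one_ne_zero p
  have hsymm : IsSymmSndFDerivAt ℝ f p := hf.contDiffAt.isSymmSndFDerivAt (by simp)
  show fderiv ℝ (fun q => fderiv ℝ f q (0, 1)) p (1, 0)
    = fderiv ℝ (fun q => fderiv ℝ f q (1, 0)) p (0, 1)
  simp only [fderiv_clm_apply hdiff (differentiableAt_const _), fderiv_const_apply]
  simpa using hsymm.eq (1, 0) (0, 1)

theorem hasDerivAt_intervalIntegral_of_contDiff {g : ℝ × ℝ → E} (hg : ContDiff ℝ 1 g)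
    (a b t : ℝ) :
    HasDerivAt (fun τ => ∫ ρ in a..b, g (τ, ρ)) (∫ ρ in a..b, partialFst g (t, ρ)) t := by
  have hg' : Continuous (partialFst g) := (contDiff_partialFst (m := 0) hg (by norm_num)).continuous
  obtain ⟨C, hC⟩ := ((isCompact_closedBall t 1).prod (isCompact_uIcc (a := a) (b := b)))
    |>.exists_bound_of_continuousOn hg'.continuousOn
  refine (intervalIntegral.hasDerivAt_integral_of_dominated_loc_of_deriv_le (μ := volume)
    (F := fun τ ρ => g (τ, ρ)) (F' := fun τ ρ => partialFst g (τ, ρ)) (bound := fun _ => C)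
    (ball_mem_nhds t one_pos) (.of_forall fun τ => ?_) ?_ ?_ ?_ intervalIntegrable_const ?_).2
  · exact (hg.continuous.comp (Continuous.prodMk_right τ)).aestronglyMeasurable
  · exact (hg.continuous.comp (Continuous.prodMk_right t)).intervalIntegrable a b
  · exact (hg'.comp (Continuous.prodMk_right t)).aestronglyMeasurable
  · exact .of_forall fun ρ hρ τ hτ =>
      hC (τ, ρ) ⟨ball_subset_closedBall hτ, uIoc_subset_uIcc hρ⟩
  · exact .of_forall fun ρ _ τ _ =>
      (hg.differentiable one_ne_zero (τ, ρ)).hasDerivAt_partialFst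

end PartialDeriv

theorem partialFst_mul {u v : ℝ × ℝ → ℝ} {p : ℝ × ℝ} (hu : DifferentiableAt ℝ u p)
    (hv : DifferentiableAt ℝ v p) :
    partialFst (fun q => u q * v q) p = partialFst u p * v p + u p * partialFst v p := by
  simp only [partialFst, fderiv_fun_mul hu hv, add_apply, smul_apply, smul_eq_mul]
  ring

theorem integral_mul_partialSnd_of_eq_zero {u v : ℝ × ℝ → ℝ} (hu : ContDiff ℝ 1 u)
    (hv : ContDiff ℝ 1 v) {a b t : ℝ} (ha : u (t, a) = 0) (hb : u (t, b) = 0) :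
    ∫ ρ in a..b, u (t, ρ) * partialSnd v (t, ρ)
      = -∫ ρ in a..b, partialSnd u (t, ρ) * v (t, ρ) := by
  have hslice {w : ℝ × ℝ → ℝ} (hw : ContDiff ℝ 1 w) :
      IntervalIntegrable (fun ρ => partialSnd w (t, ρ)) volume a b :=
    ((contDiff_partialSnd (m := 0) hw (by norm_num)).continuous.comp
      (Continuous.prodMk_right t)).intervalIntegrable a b
  have hIBP := intervalIntegral.integral_mul_deriv_eq_deriv_mul
    (fun ρ _ => (hu.differentiable one_ne_zero (t, ρ)).hasDerivAt_partialSnd)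
    (fun ρ _ => (hv.differentiable one_ne_zero (t, ρ)).hasDerivAt_partialSnd)
    (hslice hu) (hslice hv)
  simpa [ha, hb] using hIBP

theorem hasDerivAt_integral_mul_partialSnd {X Y : ℝ × ℝ → ℝ} (hX : ContDiff ℝ 2 X)
    (hY : ContDiff ℝ 2 Y) {a b t : ℝ} (ha : Y (t, a) = 0) (hb : Y (t, b) = 0) :
    HasDerivAt (fun τ => ∫ ρ in a..b, Y (τ, ρ) * partialSnd X (τ, ρ))
      (∫ ρ in a..b, (partialFst Y (t, ρ) * partialSnd X (t, ρ)
        - partialSnd Y (t, ρ) * partialFst X (t, ρ))) t := by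
  have hY1 : ContDiff ℝ 1 Y := hY.of_le one_le_two
  have hXρ : ContDiff ℝ 1 (partialSnd X) := contDiff_partialSnd hX (by norm_num)
  have hXt : ContDiff ℝ 1 (partialFst X) := contDiff_partialFst hX (by norm_num)
  have hYt : Continuous (partialFst Y) :=
    (contDiff_partialFst (m := 0) hY1 (by norm_num)).continuous
  have hYρ : Continuous (partialSnd Y) :=
    (contDiff_partialSnd (m := 0) hY1 (by norm_num)).continuous
  have hXtρ : Continuous (partialSnd (partialFst X)) :=
    (contDiff_partialSnd (m := 0) hXt (by norm_num)).continuous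
  have hslice {u v : ℝ × ℝ → ℝ} (hu : Continuous u) (hv : Continuous v) :
      IntervalIntegrable (fun ρ => u (t, ρ) * v (t, ρ)) volume a b :=
    ((hu.mul hv).comp (Continuous.prodMk_right t)).intervalIntegrable a b
  have hprod : ∀ ρ, partialFst (fun p => Y p * partialSnd X p) (t, ρ)
      = partialFst Y (t, ρ) * partialSnd X (t, ρ)
        + Y (t, ρ) * partialSnd (partialFst X) (t, ρ) := fun ρ => by
    rw [partialFst_mul (hY1.differentiable one_ne_zero _) (hXρ.differentiable one_ne_zero _),
      partialFst_partialSnd hX]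
  refine (hasDerivAt_intervalIntegral_of_contDiff (g := fun p => Y p * partialSnd X p)
    (hY1.mul hXρ) a b t).congr_deriv ?_
  simp only [hprod]
  rw [intervalIntegral.integral_add (hslice hYt hXρ.continuous) (hslice hY.continuous hXtρ),
    intervalIntegral.integral_sub (hslice hYt hXρ.continuous) (hslice hYρ hXt.continuous),
    integral_mul_partialSnd_of_eq_zero hY1 hXt ha hb, sub_eq_add_neg]

theorem stmt7_general (x y μ : ℝ → ℝ → ℝ)
    (hx : ContDiff ℝ 2 (Function.uncurry x))
    (hy : ContDiff ℝ 2 (Function.uncurry y))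
    (hbc : ∀ t, y t 0 = 0 ∧ y t 1 = 0)
    (hweak : ∀ t ≥ (0 : ℝ), ∀ φ : ℝ → ℝ, ContDiff ℝ 1 φ →
      (∫ ρ in (0 : ℝ)..1,
        (deriv (fun τ => x τ ρ) t * (-(deriv (y t) ρ))
          + deriv (fun τ => y τ ρ) t * deriv (x t) ρ) * φ ρ)
      + (∫ ρ in (0 : ℝ)..1,
          deriv (μ t) ρ * deriv φ ρ
            / Real.sqrt ((deriv (x t) ρ) ^ 2 + (deriv (y t) ρ) ^ 2)) = 0) :
    ∀ t ≥ (0 : ℝ),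
      (∫ ρ in (0 : ℝ)..1, y t ρ * deriv (x t) ρ)
        = ∫ ρ in (0 : ℝ)..1, y 0 ρ * deriv (x 0) ρ := by
  set X := Function.uncurry x
  set Y := Function.uncurry y
  have hdx : Differentiable ℝ X := hx.differentiable two_ne_zero
  have hdy : Differentiable ℝ Y := hy.differentiable two_ne_zero
  have hnormal : ∀ τ ≥ (0 : ℝ), ∫ ρ in (0 : ℝ)..1,
      (partialFst Y (τ, ρ) * partialSnd X (τ, ρ) - partialSnd Y (τ, ρ) * partialFst X (τ, ρ))
        = 0 := fun τ hτ => by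
    have h := hweak τ hτ (fun _ => 1) contDiff_const
    simp only [deriv_const', mul_zero, zero_div, intervalIntegral.integral_zero, add_zero,
      mul_one, deriv_eq_partialFst_uncurry (hdx _), deriv_eq_partialFst_uncurry (hdy _),
      deriv_eq_partialSnd_uncurry (hdx _), deriv_eq_partialSnd_uncurry (hdy _)] at h
    rw [← h]
    congr 1 with ρ
    ring
  have hA : ∀ τ ≥ (0 : ℝ),
      HasDerivAt (fun τ => ∫ ρ in (0 : ℝ)..1, Y (τ, ρ) * partialSnd X (τ, ρ)) 0 τ :=
    fun τ hτ => (hasDerivAt_integral_mul_partialSnd hx hy (hbc τ).1 (hbc τ).2).congr_deriv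
      (hnormal τ hτ)
  intro t ht
  simp only [deriv_eq_partialSnd_uncurry (hdx _)]
  exact constant_of_has_deriv_right_zero
    (fun τ hτ => (hA τ hτ.1).continuousAt.continuousWithinAt)
    (fun τ hτ => (hA τ hτ.1).hasDerivWithinAt) t ⟨ht, le_rfl⟩

/-- Mass conservation for weak solutions of the sharp-interface solid-state
dewetting model: if the weak surface-diffusion equation
⟨∂_t X · n, φ⟩_Γ + ⟨∂_s μ, ∂_s φ⟩_Γ = 0 holds for all C¹ test functions φ and
y vanishes at both contact points, then A(t) = ∫₀¹ y ∂_ρx dρ is conserved. -/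
theorem stmt7 (x y μ : ℝ → ℝ → ℝ)
    (hx : ContDiff ℝ 2 (Function.uncurry x))
    (hy : ContDiff ℝ 2 (Function.uncurry y))
    (hμ : ∀ t, ContDiff ℝ 1 (μ t))
    (hreg : ∀ t ρ, (deriv (x t) ρ, deriv (y t) ρ) ≠ (0, 0))
    (hbc : ∀ t, y t 0 = 0 ∧ y t 1 = 0)
    (hweak : ∀ t ≥ (0 : ℝ), ∀ φ : ℝ → ℝ, ContDiff ℝ 1 φ →
      (∫ ρ in (0 : ℝ)..1,
        (deriv (fun τ => x τ ρ) t * (-(deriv (y t) ρ))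
          + deriv (fun τ => y τ ρ) t * deriv (x t) ρ) * φ ρ)
      + (∫ ρ in (0 : ℝ)..1,
          deriv (μ t) ρ * deriv φ ρ
            / Real.sqrt ((deriv (x t) ρ) ^ 2 + (deriv (y t) ρ) ^ 2)) = 0) :
    ∀ t ≥ (0 : ℝ),
      (∫ ρ in (0 : ℝ)..1, y t ρ * deriv (x t) ρ)
        = ∫ ρ in (0 : ℝ)..1, y 0 ρ * deriv (x 0) ρ :=
  stmt7_general x y μ hx hy hbc hweak
end
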